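/- Let κ be an uncountable regular cardinal with κ^{<κ}=κ. Every Lusin set for κ in 2^κ has the κ-Menger property U_{<κ}^κ(O_κ, O_κ). -/

import Mathlib

noncomputable section

open Cardinal Set

namespace GenSp

/-- The index set: a canonical type of order type `κ.ord`. -/
abbrev I (κ : Cardinal.{0}) : Type := κ.ord.ToType

variable (κ : Cardinal.{0}) (A : Type)

/-- The generalized space `A^κ`. -/
abbrev Sp : Type := I κ → A

/-- The basic clopen set `[x ↾ ξ]`: all functions agreeing with `x` below `ξ`. -/
def cyl (x : Sp κ A) (ξ : I κ) : Set (Sp κ A) := {y | ∀ β < ξ, y β = x β}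

/-- The bounded topology on `A^κ`, generated by the basic clopen sets. -/
def bt : TopologicalSpace (Sp κ A) :=
  .generateFrom {S | ∃ x ξ, S = cyl κ A x ξ}

/-- Open in the bounded topology. -/
def OpenK (s : Set (Sp κ A)) : Prop := @IsOpen _ (bt κ A) s

/-- Closed in the bounded topology. -/
def ClosedK (s : Set (Sp κ A)) : Prop := @IsClosed _ (bt κ A) s

/-- Nowhere dense in the bounded topology. -/
def NwdK (s : Set (Sp κ A)) : Prop := @IsNowhereDense _ (bt κ A) s

/-- κ-meagre: a union of (at most) κ nowhere dense sets. -/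
def MeagreK (s : Set (Sp κ A)) : Prop :=
  ∃ f : I κ → Set (Sp κ A), (∀ i, NwdK κ A (f i)) ∧ s = ⋃ i, f i

/-- κ-strongly null set. -/
def SNullK (S : Set (Sp κ A)) : Prop :=
  ∀ ξ : I κ → I κ, ∃ a : I κ → Sp κ A, S ⊆ ⋃ α, cyl κ A (a α) (ξ α)

/-- Coordinatewise addition over `ℤ₂` (translation by `x`). -/
def xadd (x y : Sp κ Bool) : Sp κ Bool := fun i => xor (x i) (y i)

/-- The covering number of the κ-meagre ideal. -/
def covM : Cardinal :=
  sInf {c | ∃ 𝒜 : Set (Set (Sp κ A)), #𝒜 = c ∧ (∀ s ∈ 𝒜, MeagreK κ A s) ∧ ⋃₀ 𝒜 = Set.univ}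

/-- The cofinality of the κ-meagre ideal. -/
def cofM : Cardinal :=
  sInf {c | ∃ 𝒜 : Set (Set (Sp κ A)), #𝒜 = c ∧ (∀ s ∈ 𝒜, MeagreK κ A s) ∧
    ∀ t, MeagreK κ A t → ∃ s ∈ 𝒜, t ⊆ s}

/-- κ is weakly compact: uncountable and with the partition property κ → (κ)²₂. -/
def IsWeaklyCompact (κ : Cardinal.{0}) : Prop :=
  ℵ₀ < κ ∧ ∀ c : I κ → I κ → Bool, ∃ H : Set (I κ), #H = κ ∧
    ∃ b : Bool, ∀ i ∈ H, ∀ j ∈ H, i < j → c i j = b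

/-- `S` is κ-meagre relative to `P` (in the subspace topology). -/
def MeagreInK (P S : Set (Sp κ A)) : Prop :=
  ∃ f : I κ → Set P,
    (∀ i, @IsNowhereDense _ (TopologicalSpace.induced Subtype.val (bt κ A)) (f i)) ∧
    {x : P | (x : Sp κ A) ∈ S} = ⋃ i, f i

/-- Perfect set in the bounded topology. -/
def PerfK (P : Set (Sp κ A)) : Prop := @Perfect _ (bt κ A) P

/-- Perfectly κ-meagre set. -/
def PMeagreK (S : Set (Sp κ A)) : Prop := ∀ P, PerfK κ A P → MeagreInK κ A P S

/-- κ-λ-set. -/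
def KLambdaSet (S : Set (Sp κ A)) : Prop :=
  ∀ B ⊆ S, #B ≤ κ → ∃ G : I κ → Set (Sp κ A),
    (∀ i, OpenK κ A (G i)) ∧ (⋂ i, G i) ∩ S = B

/-- κ-σ-set. -/
def KSigmaSet (S : Set (Sp κ A)) : Prop :=
  ∀ F : I κ → Set (Sp κ A), (∀ i, ClosedK κ A (F i)) →
    ∃ G : I κ → Set (Sp κ A), (∀ i, OpenK κ A (G i)) ∧
      S ∩ (⋃ i, F i) = S ∩ (⋂ i, G i)

/-- κ-γ-set: every open (proper) κ-cover contains a κ-γ-subcover of size κ. -/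
def KGammaSet (X : Set (Sp κ A)) : Prop :=
  ∀ 𝒰 : Set (Set (Sp κ A)), (∀ U ∈ 𝒰, OpenK κ A U) → X ∉ 𝒰 →
    (∀ C ⊆ X, #C < κ → ∃ U ∈ 𝒰, C ⊆ U) →
    ∃ U : I κ → Set (Sp κ A), (∀ α, U α ∈ 𝒰) ∧
      X ⊆ ⋃ α, ⋂ β, ⋂ (_ : α < β), U β

/-- A (proper) open cover of `X` of size κ, indexed by `I κ`. -/
def IsOCovSeq (X : Set (Sp κ A)) (U : I κ → Set (Sp κ A)) : Prop :=
  (∀ α, OpenK κ A (U α)) ∧ (∀ α, U α ≠ X) ∧ X ⊆ ⋃ α, U α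

/-- A (proper) κ-γ-cover of `X`, indexed by `I κ`. -/
def IsGammaCovSeq (X : Set (Sp κ A)) (U : I κ → Set (Sp κ A)) : Prop :=
  (∀ α, OpenK κ A (U α)) ∧ (∀ α, U α ≠ X) ∧
    X ⊆ ⋃ α, ⋂ β, ⋂ (_ : α < β), U β

/-- The cover `U` is essentially of size κ: no subfamily of size `< κ` covers `X`. -/
def EssK (X : Set (Sp κ A)) (U : I κ → Set (Sp κ A)) : Prop :=
  ∀ s : Set (I κ), #s < κ → ¬ X ⊆ ⋃ β ∈ s, U β

/-- The selection principle `S₁^κ(Γ_κ, Γ_κ)`. -/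
def S1GammaGamma (X : Set (Sp κ A)) : Prop :=
  ∀ 𝒰 : I κ → I κ → Set (Sp κ A), (∀ α, IsGammaCovSeq κ A X (𝒰 α)) →
    ∃ f : I κ → I κ, IsGammaCovSeq κ A X (fun α => 𝒰 α (f α))

/-- The κ-Hurewicz property `U^κ_{<κ}(O_κ, Γ_κ)`. -/
def KHurewicz (X : Set (Sp κ A)) : Prop :=
  ∀ 𝒰 : I κ → I κ → Set (Sp κ A), (∀ α, IsOCovSeq κ A X (𝒰 α)) →
    (∀ α, EssK κ A X (𝒰 α)) →
    ∃ V : I κ → Set (I κ), (∀ α, #(V α) < κ) ∧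
      IsGammaCovSeq κ A X (fun α => ⋃ β ∈ V α, 𝒰 α β)

/-- The κ-Menger property `U^κ_{<κ}(O_κ, O_κ)`. -/
def KMenger (X : Set (Sp κ A)) : Prop :=
  ∀ 𝒰 : I κ → I κ → Set (Sp κ A), (∀ α, IsOCovSeq κ A X (𝒰 α)) →
    (∀ α, EssK κ A X (𝒰 α)) →
    ∃ V : I κ → Set (I κ), (∀ α, #(V α) < κ) ∧
      IsOCovSeq κ A X (fun α => ⋃ β ∈ V α, 𝒰 α β)

/-- The κ-Rothberger property `S₁^κ(O_κ, O_κ)`. -/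
def KRothberger (X : Set (Sp κ A)) : Prop :=
  ∀ 𝒰 : I κ → I κ → Set (Sp κ A), (∀ α, IsOCovSeq κ A X (𝒰 α)) →
    ∃ f : I κ → I κ, IsOCovSeq κ A X (fun α => 𝒰 α (f α))

/-- Closed unbounded subset of `I κ`. -/
def IsClubK (S : Set (I κ)) : Prop :=
  (∀ a : I κ, ∃ b ∈ S, a < b) ∧
  (∀ a : I κ, (∃ b, b < a) → (∀ b < a, ∃ c ∈ S, b < c ∧ c < a) → a ∈ S)

/-- Stationary subset of `I κ`. -/
def IsStatK (S : Set (I κ)) : Prop :=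
  ∀ C : Set (I κ), IsClubK κ C → (S ∩ C).Nonempty

/-- The diamond principle `◇_κ(E)`. -/
def DiamondK (E : Set (I κ)) : Prop :=
  ∃ s : I κ → Set (I κ), (∀ α, s α ⊆ Iio α) ∧
    ∀ X : Set (I κ), IsStatK κ {α | α ∈ E ∧ X ∩ Iio α = s α}

/-- The guessing principle `◇_κ(E, 2^κ, NS_κ)`. -/
def DiamondFunK (E : Set (I κ)) : Prop :=
  ∃ s : I κ → Sp κ Bool,
    ∀ x : Sp κ Bool, IsStatK κ {α | α ∈ E ∧ ∀ β < α, x β = s α β}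

/-- `S` is `X`-small. -/
def XSmall (X : Set (I κ)) (S : Set (Sp κ A)) : Prop :=
  ∃ a : I κ → Sp κ A, S ⊆ ⋃ α ∈ X, cyl κ A (a α) α

/-- `S` is small in `A^κ`. -/
def SmallK (S : Set (Sp κ A)) : Prop :=
  ∃ lam : Cardinal, lam < κ ∧ ∀ α : I κ, ∃ T : Set (Sp κ A),
    #T ≤ lam ∧ S ⊆ ⋃ x ∈ T, cyl κ A x α

/-!
Lusin sets are even κ-Rothberger. As `κ^{<κ} = κ`, there are only κ basic open sets, so κ of the
given covers can be spent one per basic set meeting `L`, each choosing a member that meets `L`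
inside that basic set. The union `W` of these choices meets every open set that meets `L`, so
`L \ W` is nowhere dense and hence, `L` being Lusin, of size at most κ; the remaining κ covers
then take care of `L \ W` one point each. Selections of single members have size `1 < κ`.
-/

section General

universe u

theorem exists_selection_along_embedding {ι J : Type u} (hι : #ι ≤ #J) (P : ι → J → J → Prop)
    (hP : ∀ i α, ∃ β, P i α β) : ∃ e : ι ↪ J, ∃ f : J → J, ∀ i, P i (e i) (f (e i)) := by
  obtain ⟨e⟩ := (Cardinal.le_def ι J).1 hι
  choose g hg using hP
  refine ⟨e, Function.extend e (fun i => g i (e i)) id, fun i => ?_⟩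
  rw [e.injective.extend_apply]
  exact hg i (e i)

theorem exists_selection_of_mk_le {X J : Type u} {S : Set X} (hS : #S ≤ #J) (𝒰 : J → J → Set X)
    (hcov : ∀ α, S ⊆ ⋃ β, 𝒰 α β) : ∃ f : J → J, S ⊆ ⋃ α, 𝒰 α (f α) := by
  obtain ⟨e, f, hf⟩ := exists_selection_along_embedding hS (fun x α β => (x : X) ∈ 𝒰 α β)
    fun x α => mem_iUnion.1 (hcov α x.2)
  exact ⟨f, fun x hx => mem_iUnion.2 ⟨e ⟨x, hx⟩, hf ⟨x, hx⟩⟩⟩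

theorem isNowhereDense_diff_of_inter_nonempty {X : Type u} [TopologicalSpace X] {L W : Set X}
    (hW : IsOpen W) (h : ∀ O, IsOpen O → (O ∩ L).Nonempty → (O ∩ W).Nonempty) :
    IsNowhereDense (L \ W) := by
  -- `L \ W` lies in the complement of the dense open set `W ∪ (closure L)ᶜ`.
  have hdense : Dense (W ∪ (closure L)ᶜ) := by
    refine dense_iff_inter_open.2 fun O hO hne => ?_
    by_cases hOL : (O ∩ L).Nonempty
    · exact (h O hO hOL).mono (inter_subset_inter_right _ subset_union_left)
    · obtain ⟨x, hxO⟩ := hne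
      refine ⟨x, hxO, Or.inr fun hxL => hOL ?_⟩
      rw [inter_comm, ← closure_inter_open_nonempty_iff hO]
      exact ⟨x, hxL, hxO⟩
  have hG : IsClosed (W ∪ (closure L)ᶜ)ᶜ ∧ IsNowhereDense (W ∪ (closure L)ᶜ)ᶜ :=
    isClosed_isNowhereDense_iff_compl.2
      ⟨by rw [compl_compl]; exact hW.union isClosed_closure.isOpen_compl, by rwa [compl_compl]⟩
  refine hG.2.mono fun x hx => ?_
  simp only [compl_union, compl_compl, mem_inter_iff, mem_compl_iff]
  exact ⟨hx.2, subset_closure hx.1⟩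

end General

section Cylinders

def cylinders : Set (Set (Sp κ A)) := {S | ∃ x ξ, S = cyl κ A x ξ}

variable {κ A}

theorem nonempty_I (hk : ℵ₀ ≤ κ) : Nonempty (I κ) :=
  mk_ne_zero_iff.1 <| by rw [mk_ord_toType]; exact (aleph0_pos.trans_le hk).ne'

theorem mem_cyl_self (x : Sp κ A) (ξ : I κ) : x ∈ cyl κ A x ξ :=
  fun _ _ => rfl

theorem cyl_eq_of_mem {x y : Sp κ A} {ξ : I κ} (h : y ∈ cyl κ A x ξ) :
    cyl κ A y ξ = cyl κ A x ξ := by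
  ext z
  constructor <;> intro hz β hβ
  · rw [hz β hβ, h β hβ]
  · rw [hz β hβ, ← h β hβ]

theorem cyl_anti (x : Sp κ A) {ξ η : I κ} (h : η ≤ ξ) : cyl κ A x ξ ⊆ cyl κ A x η :=
  fun _ hz β hβ => hz β (hβ.trans_le h)

theorem exists_cyl_subset_of_openK [Nonempty (I κ)] {U : Set (Sp κ A)} (hU : OpenK κ A U) :
    ∀ x ∈ U, ∃ ξ, cyl κ A x ξ ⊆ U := by
  induction hU with
  | basic S hS =>
    obtain ⟨z, ξ, rfl⟩ := hS
    exact fun x hx => ⟨ξ, (cyl_eq_of_mem hx).subset⟩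
  | univ => exact fun _ _ => ⟨Classical.arbitrary _, subset_univ _⟩
  | inter s t _ _ ihs iht =>
    intro x hx
    obtain ⟨ξ, hξ⟩ := ihs x hx.1
    obtain ⟨η, hη⟩ := iht x hx.2
    exact ⟨max ξ η, fun z hz =>
      ⟨hξ (cyl_anti x (le_max_left ξ η) hz), hη (cyl_anti x (le_max_right ξ η) hz)⟩⟩
  | sUnion S _ ih =>
    rintro x ⟨s, hsS, hxs⟩
    obtain ⟨ξ, h⟩ := ih s hsS x hxs
    exact ⟨ξ, h.trans (subset_sUnion_of_mem hsS)⟩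

theorem mk_cylinders_le (hk : ℵ₀ ≤ κ) (hA : #A ≤ κ) (hpow : κ ^< κ = κ) :
    #(cylinders κ A) ≤ κ := by
  let code : (Σ ξ : I κ, (Iio ξ → A)) → Set (Sp κ A) :=
    fun t => {y | ∀ β (h : β < t.1), y β = t.2 ⟨β, h⟩}
  have hsub : cylinders κ A ⊆ range code := by
    rintro _ ⟨x, ξ, rfl⟩
    exact ⟨⟨ξ, fun β => x β⟩, rfl⟩
  have hcode : ∀ ξ : I κ, #(Iio ξ → A) ≤ κ := fun ξ =>
    calc #(Iio ξ → A) = #A ^ #(Iio ξ) := (power_def _ _).symm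
      _ ≤ κ ^ #(Iio ξ) := power_le_power_right hA
      _ ≤ κ ^< κ := le_powerlt κ (by simpa using mk_Iio_lt ξ)
      _ = κ := hpow
  calc #(cylinders κ A) ≤ #(range code) := mk_le_mk_of_subset hsub
    _ ≤ #(Σ ξ : I κ, (Iio ξ → A)) := mk_range_le
    _ ≤ sum fun _ : I κ => κ := (mk_sigma _).trans_le (sum_le_sum _ _ hcode)
    _ = κ := by rw [sum_const', mk_ord_toType, mul_eq_self hk]

theorem NwdK.meagreK [Nonempty (I κ)] {s : Set (Sp κ A)} (hs : NwdK κ A s) : MeagreK κ A s :=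
  ⟨fun _ => s, fun _ => hs, (iUnion_const s).symm⟩

theorem nwdK_diff_of_cyl_inter_nonempty [Nonempty (I κ)] {L W : Set (Sp κ A)} (hW : OpenK κ A W)
    (h : ∀ x ξ, (cyl κ A x ξ ∩ L).Nonempty → (cyl κ A x ξ ∩ W).Nonempty) : NwdK κ A (L \ W) := by
  let _ := bt κ A
  refine isNowhereDense_diff_of_inter_nonempty hW fun O hO ⟨p, hpO, hpL⟩ => ?_
  obtain ⟨ξ, hξ⟩ := exists_cyl_subset_of_openK hO p hpO
  exact (h p ξ ⟨p, mem_cyl_self p ξ, hpL⟩).mono (inter_subset_inter_left _ hξ)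

end Cylinders

section Selection

variable {κ A}

theorem exists_nwdK_diff_iUnion_selection (hk : ℵ₀ ≤ κ) (hA : #A ≤ κ) (hpow : κ ^< κ = κ)
    {L : Set (Sp κ A)} (𝒰 : I κ → I κ → Set (Sp κ A)) (hopen : ∀ α β, OpenK κ A (𝒰 α β))
    (hcov : ∀ α, L ⊆ ⋃ β, 𝒰 α β) : ∃ f : I κ → I κ, NwdK κ A (L \ ⋃ α, 𝒰 α (f α)) := by
  have := nonempty_I hk
  let ι := {C | C ∈ cylinders κ A ∧ (C ∩ L).Nonempty}
  have hι : #ι ≤ #(I κ) :=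
    (mk_le_mk_of_subset fun _ hC => hC.1).trans
      ((mk_cylinders_le hk hA hpow).trans_eq (mk_ord_toType κ).symm)
  obtain ⟨e, f, hf⟩ := exists_selection_along_embedding hι
    (fun C α β => ((C : Set (Sp κ A)) ∩ L ∩ 𝒰 α β).Nonempty)
    fun C α => by
      obtain ⟨p, hp⟩ := C.2.2
      obtain ⟨β, hβ⟩ := mem_iUnion.1 (hcov α hp.2)
      exact ⟨β, p, hp, hβ⟩
  refine ⟨f, nwdK_diff_of_cyl_inter_nonempty ?_ fun x ξ hne => ?_⟩
  · let _ := bt κ A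
    exact isOpen_iUnion fun α => hopen α (f α)
  · obtain ⟨p, ⟨hpC, -⟩, hpU⟩ := hf ⟨cyl κ A x ξ, ⟨x, ξ, rfl⟩, hne⟩
    exact ⟨p, hpC, mem_iUnion.2 ⟨_, hpU⟩⟩

theorem kRothberger_of_forall_nwdK (hk : ℵ₀ ≤ κ) (hA : #A ≤ κ) (hpow : κ ^< κ = κ)
    {L : Set (Sp κ A)} (hL : ∀ X, NwdK κ A X → #↥(L ∩ X) ≤ κ) : KRothberger κ A L := by
  intro 𝒰 h𝒰
  obtain ⟨E⟩ : Nonempty (I κ ⊕ I κ ≃ I κ) := Cardinal.eq.1 (by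
    rw [mk_sum, lift_id, mk_ord_toType, add_eq_self hk])
  obtain ⟨f₁, hf₁⟩ := exists_nwdK_diff_iUnion_selection hk hA hpow (fun α => 𝒰 (E (.inl α)))
    (fun _ => (h𝒰 _).1) fun _ => (h𝒰 _).2.2
  set W := ⋃ α, 𝒰 (E (.inl α)) (f₁ α)
  have hsmall : #↥(L \ W) ≤ #(I κ) := by
    simpa only [inter_eq_self_of_subset_right sdiff_subset, mk_ord_toType] using hL _ hf₁
  obtain ⟨f₂, hf₂⟩ := exists_selection_of_mk_le hsmall (fun α => 𝒰 (E (.inr α)))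
    fun _ => sdiff_subset.trans (h𝒰 _).2.2
  refine ⟨fun α => Sum.elim f₁ f₂ (E.symm α), fun α => (h𝒰 α).1 _, fun α => (h𝒰 α).2.1 _,
    fun x hx => ?_⟩
  by_cases hxW : x ∈ W
  · obtain ⟨α, hα⟩ := mem_iUnion.1 hxW
    exact mem_iUnion.2 ⟨E (.inl α), by simpa using hα⟩
  · obtain ⟨α, hα⟩ := mem_iUnion.1 (hf₂ ⟨hx, hxW⟩)
    exact mem_iUnion.2 ⟨E (.inr α), by simpa using hα⟩

theorem KRothberger.kMenger (h : 1 < κ) {L : Set (Sp κ A)} (hL : KRothberger κ A L) :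
    KMenger κ A L := by
  intro 𝒰 h𝒰 _
  obtain ⟨f, hf⟩ := hL 𝒰 h𝒰
  refine ⟨fun α => {f α}, fun α => by rwa [mk_singleton], ?_⟩
  simpa only [biUnion_singleton] using hf

end Selection

theorem stmt15_general (κ : Cardinal.{0}) (hk : Cardinal.aleph0 < κ) (hpow : κ ^< κ = κ)
    (L : Set (Sp κ Bool))
    (hL2 : ∀ X, MeagreK κ Bool X → #↥(L ∩ X) ≤ κ) :
    KMenger κ Bool L :=
  have := nonempty_I hk.le
  have hBool : #Bool ≤ κ := by rw [mk_bool]; exact ofNat_le_aleph0.trans hk.le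
  (kRothberger_of_forall_nwdK hk.le hBool hpow fun X hX => hL2 X hX.meagreK).kMenger
    (one_lt_aleph0.trans hk)

theorem stmt15 (κ : Cardinal.{0}) (hk : Cardinal.aleph0 < κ) (hreg : κ.IsRegular) (hpow : κ ^< κ = κ)
    (L : Set (Sp κ Bool)) (hL1 : κ < #L)
    (hL2 : ∀ X, MeagreK κ Bool X → #↥(L ∩ X) ≤ κ) :
    KMenger κ Bool L :=
  stmt15_general κ hk hpow L hL2

end GenSp
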